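/- Let F be a tract with 1 ≠ 0 and ψ : T_n → F a function whose support is the basis set of an orthogonal matroid, and define φ on T_n ∪ A_n by φ(B) = ψ(B)² for transversals B, and φ(A) = (-1)^{|B∩[n]<i| + |B∩[n]<j| + [i∈B] + 1} ψ(B) ψ(B △ {i,i*,j,j*}) for almost-transversals A, where {i,i*} ∩ A = ∅, {j,j*} ⊆ A, and B ∈ T_n^σ satisfies B \ {i,i*} ∪ {j,j*} = A (σ is the common parity of |T∩[n]*| over bases T). Then φ satisfies axiom (rGP4): for any B ∈ T_n^σ and distinct i, j ∈ [n], φ(B \ {i,i*} ∪ {j,j*}) = (-1)^{[i∈B]+[j∈B]} φ(B ∪ {i,i*} \ {j,j*}). -/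
import Mathlib


/-- A tract: a commutative multiplicative monoid `F = F^× ⊔ {0}` in which every
nonzero element is invertible (a `CommGroupWithZero`), together with a null set
`N` of formal sums of elements of `F` (encoded as multisets, modulo the rule
that adding or removing a summand `0` does not change nullity), satisfying:
(T2) the only null singleton sum is `0`; (T3) there is a unique element `-1 ∈ F^×`
with `1 + (-1)` null; (T4) the null set is closed under multiplication by
elements of `F^×`. -/
structure Tract (F : Type*) [CommGroupWithZero F] where
  /-- The null set of formal sums. -/
  N : Set (Multiset F)
  /-- `0 + Σ aᵢ` is null iff `Σ aᵢ` is null. -/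
  zero_cons_mem_iff : ∀ m : Multiset F, (0 ::ₘ m) ∈ N ↔ m ∈ N
  /-- (T2) `F ∩ N = {0}`: a one-term formal sum is null iff its term is `0`. -/
  singleton_mem_iff : ∀ a : F, ({a} : Multiset F) ∈ N ↔ a = 0
  /-- (T3) There is a unique `ε ∈ F^×` with `1 + ε` null. -/
  existsUnique_neg_one : ∃! ε : F, ε ≠ 0 ∧ ({1, ε} : Multiset F) ∈ N
  /-- (T4) `c · α ∈ N` for `α ∈ N` and `c ∈ F^×`. -/
  smul_mem : ∀ c : F, c ≠ 0 → ∀ m ∈ N, Multiset.map (fun x => c * x) m ∈ N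

/-- The ground set `[n] ∪ [n]*`: the element `i ∈ [n]` is `(i, false)` and its
starred copy `i*` is `(i, true)`. -/
abbrev GroundSet (n : ℕ) := Fin n × Bool

/-- The involution `x ↦ x*`. -/
def st {n : ℕ} (x : GroundSet n) : GroundSet n := (x.1, !x.2)

/-- The skew pair `{x, x*}`. -/
def skw {n : ℕ} (x : GroundSet n) : Finset (GroundSet n) := {x, st x}

/-- The skew pair `{i, i*}` of an index `i ∈ [n]`. -/
def pr {n : ℕ} (i : Fin n) : Finset (GroundSet n) := {(i, false), (i, true)}

/-- A transversal: a subset of `[n] ∪ [n]*` containing exactly one of `i`, `i*`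
for each `i ∈ [n]`. -/
def IsTransversal {n : ℕ} (T : Finset (GroundSet n)) : Prop :=
  ∀ i : Fin n, ((i, false) ∈ T ↔ (i, true) ∉ T)

/-- An orthogonal matroid on `[n] ∪ [n]*` (set-of-bases version): a nonempty
collection of transversals satisfying the strong exchange axiom. -/
def IsOrthogonalMatroid {n : ℕ} (𝓑 : Set (Finset (GroundSet n))) : Prop :=
  𝓑.Nonempty ∧ (∀ B ∈ 𝓑, IsTransversal B) ∧
  ∀ B₁ ∈ 𝓑, ∀ B₂ ∈ 𝓑, ∀ x ∈ symmDiff B₁ B₂,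
    ∃ y ∈ (symmDiff B₁ B₂) \ skw x,
      symmDiff B₁ (skw x ∪ skw y) ∈ 𝓑 ∧ symmDiff B₂ (skw x ∪ skw y) ∈ 𝓑

/-- The function `φ = Φ_{W→GP}(ψ)` satisfies axiom (rGP4).  Here `ψ : T_n → F` has
support equal to the basis set of an orthogonal matroid (all of whose bases have
`|B ∩ [n]*| ≡ σ (mod 2)`), `φ(B) = ψ(B)²` for transversals `B`, and
`φ(A) = (-1)^{|B∩[n]<i| + |B∩[n]<j| + [i∈B] + 1} ψ(B) ψ(B △ {i,i*,j,j*})` for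
almost-transversals `A = B \ {i,i*} ∪ {j,j*}` with `B ∈ T_n^σ`. -/
theorem phi_satisfies_rGP4 {n : ℕ} {F : Type*} [CommGroupWithZero F] (T : Tract F)
    (ε : F) (hε₀ : ε ≠ 0) (hε : ({1, ε} : Multiset F) ∈ T.N)
    (σ : ℕ) (hσ : σ ≤ 1)
    (ψ φ : Finset (GroundSet n) → F)
    (hOM : IsOrthogonalMatroid {B : Finset (GroundSet n) | IsTransversal B ∧ ψ B ≠ 0})
    (hparity : ∀ B : Finset (GroundSet n), IsTransversal B → ψ B ≠ 0 →
      (B.filter (fun p => p.2 = true)).card % 2 = σ)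
    (hφT : ∀ B : Finset (GroundSet n), IsTransversal B → φ B = ψ B * ψ B)
    (hφA : ∀ (A : Finset (GroundSet n)) (i j : Fin n) (B : Finset (GroundSet n)),
      IsTransversal B → (B.filter (fun p => p.2 = true)).card % 2 = σ → i ≠ j →
      pr i ∩ A = ∅ → pr j ⊆ A → (B \ pr i) ∪ pr j = A →
      φ A = ε ^ ((B.filter (fun p => p.2 = false ∧ p.1 < i)).card
                  + (B.filter (fun p => p.2 = false ∧ p.1 < j)).card
                  + (if (i, false) ∈ B then 1 else 0) + 1)
              * (ψ B * ψ (symmDiff B (pr i ∪ pr j)))) :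
    ∀ B : Finset (GroundSet n), IsTransversal B →
      (B.filter (fun p => p.2 = true)).card % 2 = σ →
      ∀ i j : Fin n, i ≠ j →
        φ ((B \ pr i) ∪ pr j)
          = ε ^ ((if (i, false) ∈ B then 1 else 0) + (if (j, false) ∈ B then 1 else 0))
              * φ ((B ∪ pr i) \ pr j) := by
  intro B hB hpar i j hij
  -- ε squares to 1
  have hsq : ε * ε = 1 := by
    have hinv : ({1, ε⁻¹} : Multiset F) ∈ T.N := by
      have h := T.smul_mem ε⁻¹ (inv_ne_zero hε₀) _ hε
      have heq : Multiset.map (fun x => ε⁻¹ * x) ({1, ε} : Multiset F) = {ε⁻¹, 1} := by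
        simp [inv_mul_cancel₀ hε₀]
      rw [heq] at h
      rwa [show ({ε⁻¹, 1} : Multiset F) = {1, ε⁻¹} from Multiset.cons_swap _ _ _] at h
    obtain ⟨e, _, hu⟩ := T.existsUnique_neg_one
    have h12 : ε⁻¹ = ε := (hu ε⁻¹ ⟨inv_ne_zero hε₀, hinv⟩).trans (hu ε ⟨hε₀, hε⟩).symm
    have h := mul_inv_cancel₀ hε₀
    rwa [h12] at h
  have hd : Disjoint (pr i) (pr j) := by
    simp only [pr, Finset.disjoint_insert_left, Finset.disjoint_singleton_left,
      Finset.mem_insert, Finset.mem_singleton]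
    simp [Prod.ext_iff, hij]
  have h1 := hφA ((B \ pr i) ∪ pr j) i j B hB hpar hij ?_ Finset.subset_union_right rfl
  · have h2 := hφA ((B ∪ pr i) \ pr j) j i B hB hpar hij.symm ?_ ?_ ?_
    · rw [h1, h2, show pr j ∪ pr i = pr i ∪ pr j from Finset.union_comm _ _]
      set c1 := (B.filter (fun p => p.2 = false ∧ p.1 < i)).card with hc1
      set c2 := (B.filter (fun p => p.2 = false ∧ p.1 < j)).card with hc2
      set t1 := (if (i, false) ∈ B then 1 else 0) with ht1
      set t2 := (if (j, false) ∈ B then 1 else 0) with ht2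
      have key : ε ^ (c1 + c2 + t1 + 1) = ε ^ (t1 + t2 + (c2 + c1 + t2 + 1)) := by
        have e2 : ε ^ (2 * t2) = 1 := by
          rw [pow_mul, show ε ^ 2 = 1 by rw [sq, hsq], one_pow]
        calc ε ^ (c1 + c2 + t1 + 1) = ε ^ (c1 + c2 + t1 + 1) * ε ^ (2 * t2) := by
              rw [e2, mul_one]
          _ = ε ^ (t1 + t2 + (c2 + c1 + t2 + 1)) := by rw [← pow_add]; ring_nf
      rw [key, pow_add, mul_assoc]
    · rw [Finset.inter_comm]; exact Finset.sdiff_inter_self _ _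
    · exact Finset.subset_sdiff.mpr ⟨Finset.subset_union_right, hd⟩
    · rw [Finset.union_sdiff_distrib, Finset.sdiff_eq_self_of_disjoint hd]
  · rw [Finset.eq_empty_iff_forall_notMem]
    intro x hx
    simp only [pr, Finset.mem_inter, Finset.mem_union, Finset.mem_sdiff, Finset.mem_insert,
      Finset.mem_singleton] at hx
    obtain ⟨ha, hb | hb⟩ := hx
    · exact hb.2 ha
    · rcases ha with rfl | rfl <;> rcases hb with h | h <;> simp_all
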